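/- arXiv:1606.04910 — 5 statements merged into one kernel-verified Lean document; each statement's English description precedes it below -/
import Mathlib

section
/- If Φ : M → M is a unital Schwartz map on a von Neumann algebra M (i.e., Φ(1)=1 and Φ(a*)Φ(a) ≤ Φ(a*a) for all a), and Φ admits an inverse Φ⁻¹ which is also a unital Schwartz map, then Φ is a *-automorphism of M. -/
/-!
For mutually inverse Schwartz maps `Φ` and `Ψ`, the defect `d = Φ (a⋆a) - Φ(a)⋆Φ(a)` is positive,
so `Ψ d ≥ 0` because Schwartz maps are positive. On the other hand
`Ψ d = a⋆a - Ψ (Φ(a)⋆Φ(a)) ≤ 0` by the Schwartz inequality for `Ψ` at `Φ a`. Hence `Ψ d = 0` and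
`d = 0`. A linear map preserving every `a⋆a` preserves every `b⋆a` by polarization; taking `a = 1`
and using `Φ 1 = 1` gives `Φ (b⋆) = Φ(b)⋆`, and then multiplicativity.
-/

set_option linter.unusedSectionVars false

open scoped ComplexOrder

section
variable {M : Type*} [NormedRing M] [StarRing M] [CStarRing M] [NormedAlgebra ℂ M]
  [StarModule ℂ M] [CompleteSpace M] [PartialOrder M] [StarOrderedRing M]

def multDomain (Φ : Module.End ℂ M) : Set M :=
  {a : M | Φ (star a * a) = Φ (star a) * Φ a ∧ Φ (a * star a) = Φ a * Φ (star a)}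

def IsState (φ : M →ₗ[ℂ] ℂ) : Prop :=
  φ 1 = 1 ∧ ∀ a : M, 0 ≤ φ (star a * a)

def IsFaithful (φ : M →ₗ[ℂ] ℂ) : Prop :=
  ∀ a : M, φ (star a * a) = 0 → a = 0

def IsSchwartz (Φ : Module.End ℂ M) : Prop :=
  Φ 1 = 1 ∧ ∀ a : M, star (Φ a) * Φ a ≤ Φ (star a * a)

def phiPerp (φ : M →ₗ[ℂ] ℂ) (R : Set M) : Set M :=
  {a : M | ∀ x ∈ R, φ (star a * x) = 0}

lemma map_nonneg_of_map_star_mul_self_nonneg {R S F : Type*} [NonUnitalSemiring R]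
    [PartialOrder R] [StarRing R] [StarOrderedRing R] [AddCommMonoid S] [PartialOrder S]
    [IsOrderedAddMonoid S] [FunLike F R S] [AddMonoidHomClass F R S] (f : F)
    (hf : ∀ a, 0 ≤ f (star a * a)) {x : R} (hx : 0 ≤ x) : 0 ≤ f x := by
  rw [StarOrderedRing.nonneg_iff] at hx
  induction hx using AddSubmonoid.closure_induction with
  | mem _ hy => obtain ⟨a, rfl⟩ := hy; exact hf a
  | zero => rw [map_zero]
  | add _ _ _ _ hx hy => rw [map_add]; exact add_nonneg hx hy

lemma star_mul_polarization {A : Type*} [NonUnitalRing A] [StarRing A] [Module ℂ A]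
    [StarModule ℂ A] [IsScalarTower ℂ A A] [SMulCommClass ℂ A A] (a b : A) :
    (4 : ℂ) • (star b * a) =
      star (a + b) * (a + b) - star (a - b) * (a - b)
        + Complex.I • (star (a + Complex.I • b) * (a + Complex.I • b))
        - Complex.I • (star (a - Complex.I • b) * (a - Complex.I • b)) := by
  simp only [star_add, star_sub, star_smul, Complex.star_def, Complex.conj_I, add_mul, sub_mul,
    mul_add, mul_sub, smul_mul_assoc, mul_smul_comm, smul_add, smul_sub, smul_smul,
    mul_neg, Complex.I_mul_I]
  module

lemma map_star_mul_of_map_star_mul_self {A B F : Type*} [NonUnitalRing A] [StarRing A]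
    [Module ℂ A] [StarModule ℂ A] [IsScalarTower ℂ A A] [SMulCommClass ℂ A A]
    [NonUnitalRing B] [StarRing B] [Module ℂ B] [StarModule ℂ B] [IsScalarTower ℂ B B]
    [SMulCommClass ℂ B B] [FunLike F A B] [LinearMapClass F ℂ A B] (f : F)
    (hf : ∀ a, f (star a * a) = star (f a) * f a) (a b : A) :
    f (star b * a) = star (f b) * f a := by
  have h := congrArg f (star_mul_polarization a b)
  simp only [map_smul, map_add, map_sub, hf] at h
  rw [← star_mul_polarization] at h
  exact smul_right_injective B (four_ne_zero (α := ℂ)) h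

lemma map_star_mul_self_of_leftInverse {R S F G : Type*} [NonUnitalRing R] [PartialOrder R]
    [StarRing R] [StarOrderedRing R] [NonUnitalRing S] [PartialOrder S] [StarRing S]
    [StarOrderedRing S] [FunLike F R S] [AddMonoidHomClass F R S] [FunLike G S R]
    [AddMonoidHomClass G S R] {f : F} {g : G}
    (hf : ∀ a, star (f a) * f a ≤ f (star a * a)) (hg : ∀ b, star (g b) * g b ≤ g (star b * b))
    (hgf : Function.LeftInverse g f) (hg_inj : Function.Injective g) (a : R) :
    f (star a * a) = star (f a) * f a := by
  set d := f (star a * a) - star (f a) * f a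
  have hg_pos : ∀ b, 0 ≤ g (star b * b) := fun b => (star_mul_self_nonneg _).trans (hg b)
  have hgd_nonneg : 0 ≤ g d :=
    map_nonneg_of_map_star_mul_self_nonneg g hg_pos (sub_nonneg.2 (hf a))
  have hgd_nonpos : g d ≤ 0 := by
    rw [map_sub, hgf, sub_nonpos]
    simpa only [hgf a] using hg (f a)
  have : g d = g 0 := by rw [map_zero]; exact le_antisymm hgd_nonpos hgd_nonneg
  exact sub_eq_zero.1 (hg_inj this)

/-- a unital Schwartz map with a unital Schwartz inverse is a *-automorphism. -/
theorem schwartz_inverse_is_automorphism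
    (Φ Ψ : Module.End ℂ M) (hΦ : IsSchwartz Φ) (hΨ : IsSchwartz Ψ)
    (hinv₁ : ∀ a : M, Φ (Ψ a) = a) (hinv₂ : ∀ a : M, Ψ (Φ a) = a) :
    (∀ a b : M, Φ (a * b) = Φ a * Φ b) ∧ (∀ a : M, Φ (star a) = star (Φ a)) ∧
      Function.Bijective Φ := by
  have hmul : ∀ a b : M, Φ (star b * a) = star (Φ b) * Φ a :=
    map_star_mul_of_map_star_mul_self Φ
      (map_star_mul_self_of_leftInverse hΦ.2 hΨ.2 hinv₂ (Function.LeftInverse.injective hinv₁))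
  have hstar : ∀ a : M, Φ (star a) = star (Φ a) := fun a => by
    simpa only [mul_one, hΦ.1] using hmul 1 a
  refine ⟨fun a b => ?_, hstar, Function.LeftInverse.injective hinv₂,
    Function.RightInverse.surjective hinv₁⟩
  simpa only [star_star, hstar] using hmul b (star a)

end
end

section
/- Let Φ be a unital Schwartz map on a von Neumann algebra M admitting a faithful stationary state φ (φ∘Φ = φ, φ faithful). Then for every natural number n, the multiplicative domain of Φⁿ is contained in the multiplicative domain of Φⁿ⁻¹: D_{Φⁿ} ⊆ D_{Φⁿ⁻¹}. -/
/-! Iterates of a Schwartz map are Schwartz maps, and a positive map on a C⋆-algebra commutes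
with `star`, so `a ∈ D_Ψ` amounts to equality in the Schwartz inequality
`star (Ψ x) * Ψ x ≤ Ψ (star x * x)` at `x = a` and `x = star a`. Write `Φ^(n+1) = Φ * Φ^n`.
The defect `Φ^n (star a * a) - star (Φ^n a) * Φ^n a` is positive, while `φ = φ ∘ Φ`, equality for
`Φ^(n+1)` and the Schwartz inequality of `Φ` bound its state by `0`; faithfulness kills it. -/

open scoped ComplexOrder

section StarOrdered

variable {F A B : Type*} [FunLike F A B]

theorem map_nonneg_of_forall_star_mul_self_nonneg [NonUnitalSemiring A] [PartialOrder A]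
    [StarRing A] [StarOrderedRing A] [AddCommMonoid B] [PartialOrder B] [IsOrderedAddMonoid B]
    [AddMonoidHomClass F A B] (f : F) (hf : ∀ s, 0 ≤ f (star s * s)) {x : A} (hx : 0 ≤ x) :
    0 ≤ f x := by
  rw [StarOrderedRing.nonneg_iff] at hx
  induction hx using AddSubmonoid.closure_induction with
  | mem _ hs => obtain ⟨s, rfl⟩ := hs; exact hf s
  | zero => simp
  | add x y _ _ hx hy => rw [map_add]; exact add_nonneg hx hy

theorem monotone_of_forall_star_mul_self_nonneg [NonUnitalRing A] [PartialOrder A]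
    [StarRing A] [StarOrderedRing A] [AddCommGroup B] [PartialOrder B] [IsOrderedAddMonoid B]
    [AddMonoidHomClass F A B] (f : F) (hf : ∀ s, 0 ≤ f (star s * s)) : Monotone f := by
  intro x y hxy
  simpa using map_nonneg_of_forall_star_mul_self_nonneg f hf (sub_nonneg.mpr hxy)

theorem eq_zero_of_nonneg_of_map_eq_zero [NonUnitalSemiring A] [PartialOrder A]
    [StarRing A] [StarOrderedRing A] [AddCommMonoid B] [PartialOrder B] [IsOrderedAddMonoid B]
    [AddMonoidHomClass F A B] (f : F) (hf : ∀ s, 0 ≤ f (star s * s))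
    (hfaith : ∀ s, f (star s * s) = 0 → s = 0) {x : A} (hx : 0 ≤ x) (hfx : f x = 0) :
    x = 0 := by
  rw [StarOrderedRing.nonneg_iff] at hx
  induction hx using AddSubmonoid.closure_induction with
  | mem _ hs => obtain ⟨s, rfl⟩ := hs; simp [hfaith s hfx]
  | zero => rfl
  | add x y hx hy ihx ihy =>
    rw [map_add] at hfx
    have hfx_nonneg := map_nonneg_of_forall_star_mul_self_nonneg f hf
      (StarOrderedRing.nonneg_iff.mpr hx)
    have hfy_nonneg := map_nonneg_of_forall_star_mul_self_nonneg f hf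
      (StarOrderedRing.nonneg_iff.mpr hy)
    obtain ⟨hx0, hy0⟩ := (add_eq_zero_iff_of_nonneg hfx_nonneg hfy_nonneg).mp hfx
    rw [ihx hx0, ihy hy0, add_zero]

open Complex ComplexStarModule in
theorem map_star_of_map_nonneg [CStarAlgebra A] [PartialOrder A] [StarOrderedRing A]
    [NonUnitalRing B] [PartialOrder B] [StarRing B] [StarOrderedRing B] [Module ℂ B]
    [StarModule ℂ B] (f : A →ₗ[ℂ] B) (hf : ∀ x, 0 ≤ x → 0 ≤ f x) (a : A) :
    f (star a) = star (f a) := by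
  have hsa : ∀ x : A, IsSelfAdjoint x → IsSelfAdjoint (f x) := fun x hx => by
    rw [← CFC.posPart_sub_negPart x hx, map_sub]
    exact .sub (.of_nonneg (hf _ (CFC.posPart_nonneg x)))
      (.of_nonneg (hf _ (CFC.negPart_nonneg x)))
  have key : ∀ x y : A, IsSelfAdjoint x → IsSelfAdjoint y →
      f (star (x + I • y)) = star (f (x + I • y)) := fun x y hx hy => by
    simp only [star_add, star_smul, RCLike.star_def, conj_I, neg_smul, map_add, map_neg, map_smul,
      hx.star_eq, hy.star_eq, (hsa x hx).star_eq, (hsa y hy).star_eq]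
  simpa only [realPart_add_I_smul_imaginaryPart] using key _ _ (ℜ a).prop (ℑ a).prop

end StarOrdered

namespace IsSchwartz

variable {M : Type*} [NormedRing M] [StarRing M] [NormedAlgebra ℂ M] [PartialOrder M]
  {Φ Ψ : Module.End ℂ M}

theorem one : IsSchwartz (1 : Module.End ℂ M) :=
  ⟨rfl, fun _ => le_rfl⟩

variable [StarOrderedRing M]

theorem monotone (hΦ : IsSchwartz Φ) : Monotone Φ :=
  monotone_of_forall_star_mul_self_nonneg Φ fun s => (star_mul_self_nonneg _).trans (hΦ.2 s)

theorem mul (hΦ : IsSchwartz Φ) (hΨ : IsSchwartz Ψ) : IsSchwartz (Φ * Ψ) := by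
  refine ⟨by simp [hΨ.1, hΦ.1], fun a => ?_⟩
  calc star (Φ (Ψ a)) * Φ (Ψ a) ≤ Φ (star (Ψ a) * Ψ a) := hΦ.2 _
    _ ≤ Φ (Ψ (star a * a)) := hΦ.monotone (hΨ.2 a)

theorem pow (hΦ : IsSchwartz Φ) (n : ℕ) : IsSchwartz (Φ ^ n) := by
  induction n with
  | zero => exact one
  | succ n ih => rw [pow_succ']; exact hΦ.mul ih

theorem map_star_mul_self_eq_of_mul (hΦ : IsSchwartz Φ) (hΨ : IsSchwartz Ψ)
    {φ : M →ₗ[ℂ] ℂ} (hφ : IsState φ) (hfaith : IsFaithful φ)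
    (hstat : ∀ a : M, φ (Φ a) = φ a) {a : M}
    (h : Φ (Ψ (star a * a)) = star (Φ (Ψ a)) * Φ (Ψ a)) :
    Ψ (star a * a) = star (Ψ a) * Ψ a := by
  have hφ_mono := monotone_of_forall_star_mul_self_nonneg φ hφ.2
  have hdefect : 0 ≤ Ψ (star a * a) - star (Ψ a) * Ψ a := sub_nonneg.mpr (hΨ.2 a)
  have hle : φ (Ψ (star a * a)) ≤ φ (star (Ψ a) * Ψ a) :=
    calc φ (Ψ (star a * a)) = φ (star (Φ (Ψ a)) * Φ (Ψ a)) := by rw [← h, hstat]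
      _ ≤ φ (Φ (star (Ψ a) * Ψ a)) := hφ_mono (hΦ.2 _)
      _ = φ (star (Ψ a) * Ψ a) := hstat _
  have hzero : φ (Ψ (star a * a) - star (Ψ a) * Ψ a) = 0 :=
    le_antisymm (by rw [map_sub]; exact sub_nonpos.mpr hle)
      (by simpa using hφ_mono hdefect)
  exact sub_eq_zero.mp (eq_zero_of_nonneg_of_map_eq_zero φ hφ.2 hfaith hdefect hzero)

variable [CStarRing M] [StarModule ℂ M] [CompleteSpace M]

theorem map_star (hΦ : IsSchwartz Φ) (a : M) : Φ (star a) = star (Φ a) := by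
  let _ : CStarAlgebra M := {}
  exact map_star_of_map_nonneg Φ (fun x hx => by simpa using hΦ.monotone hx) a

theorem mem_multDomain_iff (hΦ : IsSchwartz Φ) {a : M} :
    a ∈ multDomain Φ ↔ Φ (star a * a) = star (Φ a) * Φ a ∧
      Φ (star (star a) * star a) = star (Φ (star a)) * Φ (star a) := by
  simp only [multDomain, Set.mem_ofPred_eq, star_star, hΦ.map_star]

theorem multDomain_mul_subset (hΦ : IsSchwartz Φ) (hΨ : IsSchwartz Ψ)
    {φ : M →ₗ[ℂ] ℂ} (hφ : IsState φ) (hfaith : IsFaithful φ)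
    (hstat : ∀ a : M, φ (Φ a) = φ a) : multDomain (Φ * Ψ) ⊆ multDomain Ψ := by
  intro a ha
  rw [(hΦ.mul hΨ).mem_multDomain_iff] at ha
  rw [hΨ.mem_multDomain_iff]
  exact ⟨hΦ.map_star_mul_self_eq_of_mul hΨ hφ hfaith hstat ha.1,
    hΦ.map_star_mul_self_eq_of_mul hΨ hφ hfaith hstat ha.2⟩

end IsSchwartz

section
variable {M : Type*} [NormedRing M] [StarRing M] [CStarRing M] [NormedAlgebra ℂ M]
  [StarModule ℂ M] [CompleteSpace M] [PartialOrder M] [StarOrderedRing M]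

/-- with a faithful stationary state, `D_{Φ^{n+1}} ⊆ D_{Φ^n}`. -/
theorem multDomain_pow_antitone
    (Φ : Module.End ℂ M) (hΦ : IsSchwartz Φ)
    (φ : M →ₗ[ℂ] ℂ) (hφ : IsState φ) (hfaith : IsFaithful φ)
    (hstat : ∀ a : M, φ (Φ a) = φ a) :
    ∀ n : ℕ, multDomain (Φ ^ (n + 1)) ⊆ multDomain (Φ ^ n) := by
  intro n
  rw [pow_succ']
  exact hΦ.multDomain_mul_subset (hΦ.pow n) hφ hfaith hstat

end
end

section
/- Let M be a von Neumann algebra, φ a faithful normal state with GNS triple (H_φ, π_φ, Ω_φ), and R a σ_t^φ-invariant von Neumann subalgebra. Let H₀ and K₀ be the closures of π_φ(R)Ω_φ and π_φ(R^⊥φ)Ω_φ respectively. Then H_φ = H₀ ⊕ K₀ (orthogonal direct sum) and the orthogonal projection P₀ onto H₀ belongs to the commutant π_φ(R)'. -/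
/-!
In the GNS space `⟪π a Ω, π b Ω⟫ = φ (a⋆ b)`, so `π(R^⊥φ)Ω` is orthogonal to `π(R)Ω`, and the
decomposition `M = R + R^⊥φ` together with cyclicity of `Ω` makes the sum of the two spans dense.
Two orthogonal subspaces with dense sum have closures that are each other's orthogonal
complements, which gives `H_φ = H₀ ⊕ K₀`. Since `R` is an algebra, `π(R)` maps `π(R)Ω` into
itself, hence `H₀` too; since `R` is `⋆`-closed and `π(r)† = π(r⋆)`, also `H₀ᗮ` is invariant,
i.e. `P₀ ∈ π(R)'`.
-/

open scoped ComplexOrder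

section
variable {M : Type*} [NormedRing M] [StarRing M] [CStarRing M] [NormedAlgebra ℂ M]
  [StarModule ℂ M] [CompleteSpace M] [PartialOrder M] [StarOrderedRing M]

section

open Submodule Module.End ContinuousLinearMap

variable {𝕜 A E : Type*} [RCLike 𝕜] [Semiring A] [StarRing A] [Algebra 𝕜 A]
  [NormedAddCommGroup E] [InnerProductSpace 𝕜 E] [CompleteSpace E]

theorem Submodule.IsOrtho.orthogonal_topologicalClosure_eq {S T : Submodule 𝕜 E} (hST : S ⟂ T)
    (hdense : (S ⊔ T).topologicalClosure = ⊤) :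
    S.topologicalClosureᗮ = T.topologicalClosure := by
  have hclosure : S.topologicalClosureᗮ = Sᗮ := by
    rw [← orthogonal_orthogonal_eq_closure, triorthogonal_eq_orthogonal]
  have hle : T.topologicalClosure ≤ Sᗮ :=
    T.topologicalClosure_minimal (isOrtho_iff_le.mp hST.symm) S.isClosed_orthogonal
  have hbot : T.topologicalClosureᗮ ⊓ Sᗮ = ⊥ := by
    rw [← orthogonal_orthogonal_eq_closure, triorthogonal_eq_orthogonal, inf_orthogonal,
      sup_comm, ← topologicalClosure_eq_top_iff, hdense]
  rw [hclosure, ← sup_orthogonal_inf_of_hasOrthogonalProjection hle, hbot, sup_bot_eq]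

variable (π : A →⋆ₐ[𝕜] (E →L[𝕜] E)) (Ω : E)

theorem StarAlgHom.inner_map_apply_map_apply (a b : A) :
    inner 𝕜 (π a Ω) (π b Ω) = inner 𝕜 Ω (π (star a * b) Ω) := by
  rw [map_mul, map_star, star_eq_adjoint, mul_apply_eq_comp, adjoint_inner_right]

theorem StarAlgHom.isOrtho_span_image_apply {s t : Set A}
    (h : ∀ a ∈ s, ∀ b ∈ t, inner 𝕜 Ω (π (star a * b) Ω) = 0) :
    span 𝕜 ((π · Ω) '' s) ⟂ span 𝕜 ((π · Ω) '' t) := by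
  rw [isOrtho_span]
  rintro _ ⟨a, ha, rfl⟩ _ ⟨b, hb, rfl⟩
  rw [π.inner_map_apply_map_apply]
  exact h a ha b hb

theorem StarAlgHom.span_image_apply_mem_invtSubmodule {s : Set A} {a : A}
    (ha : ∀ b ∈ s, a * b ∈ s) :
    span 𝕜 ((π · Ω) '' s) ∈ invtSubmodule (π a : E →ₗ[𝕜] E) := by
  rw [mem_invtSubmodule_iff_map_le, map_span, span_le]
  rintro _ ⟨_, ⟨b, hb, rfl⟩, rfl⟩
  exact subset_span ⟨a * b, ha b hb, by simp [map_mul]⟩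

theorem StarAlgHom.orthogonal_mem_invtSubmodule {K : Submodule 𝕜 E} {a : A}
    (h : K ∈ invtSubmodule (π (star a) : E →ₗ[𝕜] E)) :
    Kᗮ ∈ invtSubmodule (π a : E →ₗ[𝕜] E) := by
  rw [map_star, star_eq_adjoint] at h
  exact ContinuousLinearMap.orthogonal_mem_invtSubmodule h

theorem StarAlgHom.topologicalClosure_span_image_apply_sup_eq_top {s t : Set A}
    (hcyclic : Dense (span 𝕜 (Set.range (π · Ω)) : Set E))
    (hdec : ∀ a : A, ∃ r ∈ s, ∃ p ∈ t, a = r + p) :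
    (span 𝕜 ((π · Ω) '' s) ⊔ span 𝕜 ((π · Ω) '' t)).topologicalClosure = ⊤ := by
  refine eq_top_iff.mpr (dense_iff_topologicalClosure_eq_top.mp hcyclic ▸
    topologicalClosure_mono (span_le.mpr ?_))
  rintro _ ⟨a, rfl⟩
  obtain ⟨r, hr, p, hp, rfl⟩ := hdec a
  change π (r + p) Ω ∈ _
  rw [map_add, add_apply]
  exact add_mem (mem_sup_left (subset_span ⟨r, hr, rfl⟩))
    (mem_sup_right (subset_span ⟨p, hp, rfl⟩))

end

variable {H : Type*} [NormedAddCommGroup H] [InnerProductSpace ℂ H] [CompleteSpace H]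

open Module.End in
theorem gns_orthogonal_splitting_general
    (π : M →⋆ₐ[ℂ] (H →L[ℂ] H)) (Ω : H) (φ : M →ₗ[ℂ] ℂ)
    (hφdef : ∀ a : M, φ a = inner (𝕜 := ℂ) Ω (π a Ω))
    (hcyclic : Dense (Submodule.span ℂ (Set.range fun a : M => π a Ω) : Set H))
    (R : StarSubalgebra ℂ M)
    (hdec : ∀ a : M, ∃ r ∈ R, ∃ p ∈ phiPerp φ (R : Set M), a = r + p) :
    (((Submodule.span ℂ ((fun r : M => π r Ω) '' (R : Set M))).topologicalClosure)ᗮ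
        = (Submodule.span ℂ ((fun r : M => π r Ω) '' phiPerp φ (R : Set M))).topologicalClosure) ∧
    (∀ r ∈ R, ∀ ψ ∈ (Submodule.span ℂ ((fun r : M => π r Ω) '' (R : Set M))).topologicalClosure,
        π r ψ ∈ (Submodule.span ℂ ((fun r : M => π r Ω) '' (R : Set M))).topologicalClosure) ∧
    (∀ r ∈ R, ∀ ψ ∈ ((Submodule.span ℂ ((fun r : M => π r Ω) '' (R : Set M))).topologicalClosure)ᗮ,
        π r ψ ∈ ((Submodule.span ℂ ((fun r : M => π r Ω) '' (R : Set M))).topologicalClosure)ᗮ) := by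
  have hortho : Submodule.span ℂ ((π · Ω) '' phiPerp φ (R : Set M)) ⟂
      Submodule.span ℂ ((π · Ω) '' (R : Set M)) :=
    π.isOrtho_span_image_apply Ω fun p hp r hr => hφdef (star p * r) ▸ hp r hr
  have hinvariant : ∀ r ∈ R, (Submodule.span ℂ ((π · Ω) '' (R : Set M))).topologicalClosure ∈
      invtSubmodule (π r : H →ₗ[ℂ] H) := fun r hr =>
    Submodule.topologicalClosure_mem_invtSubmodule <|
      π.span_image_apply_mem_invtSubmodule Ω fun _ => R.mul_mem hr
  exact ⟨hortho.symm.orthogonal_topologicalClosure_eq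
      (π.topologicalClosure_span_image_apply_sup_eq_top Ω hcyclic hdec),
    hinvariant,
    fun r hr => π.orthogonal_mem_invtSubmodule (hinvariant _ (star_mem hr))⟩

/-- for a modular-invariant subalgebra `R` (expressed through the induced
decomposition `M = R ⊕ R^⊥φ`), the GNS space splits orthogonally as `H_φ = H₀ ⊕ K₀`
and the orthogonal projection `P₀` onto `H₀` lies in the commutant `π_φ(R)'`
(equivalently, both `H₀` and `H₀ᗮ` are invariant under `π_φ(R)`). -/
theorem gns_orthogonal_splitting
    (π : M →⋆ₐ[ℂ] (H →L[ℂ] H)) (Ω : H) (φ : M →ₗ[ℂ] ℂ)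
    (hφdef : ∀ a : M, φ a = inner (𝕜 := ℂ) Ω (π a Ω))
    (hcyclic : Dense (Submodule.span ℂ (Set.range fun a : M => π a Ω) : Set H))
    (hφ : IsState φ) (hfaith : IsFaithful φ)
    (R : StarSubalgebra ℂ M)
    (hstar : ∀ a ∈ phiPerp φ (R : Set M), star a ∈ phiPerp φ (R : Set M))
    (hdec : ∀ a : M, ∃ r ∈ R, ∃ p ∈ phiPerp φ (R : Set M), a = r + p) :
    (((Submodule.span ℂ ((fun r : M => π r Ω) '' (R : Set M))).topologicalClosure)ᗮ
        = (Submodule.span ℂ ((fun r : M => π r Ω) '' phiPerp φ (R : Set M))).topologicalClosure) ∧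
    (∀ r ∈ R, ∀ ψ ∈ (Submodule.span ℂ ((fun r : M => π r Ω) '' (R : Set M))).topologicalClosure,
        π r ψ ∈ (Submodule.span ℂ ((fun r : M => π r Ω) '' (R : Set M))).topologicalClosure) ∧
    (∀ r ∈ R, ∀ ψ ∈ ((Submodule.span ℂ ((fun r : M => π r Ω) '' (R : Set M))).topologicalClosure)ᗮ,
        π r ψ ∈ ((Submodule.span ℂ ((fun r : M => π r Ω) '' (R : Set M))).topologicalClosure)ᗮ) :=
  gns_orthogonal_splitting_general π Ω φ hφdef hcyclic R hdec

end
end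

section
/- Let (M, Φ, φ) be a quantum dynamical system with φ-adjoint Φ♯ and D_∞ as above. If B is any von Neumann subalgebra of M such that the restriction of Φ to B is a *-automorphism of B, then B ⊆ D_∞. Thus D_∞ is the maximal subalgebra on which Φ is reversible. -/
/-! For `c ∈ B` the map `Φ` is multiplicative on the pair `c, c⋆`, so the positive semidefinite
form `φ (Φ (u⋆ v)) - φ ((Φ u)⋆ (Φ v))` vanishes at `(c⋆, c⋆)`, and by its Cauchy–Schwarz inequality
`φ (Φ c * Φ a) = φ (Φ (c * a)) = φ (c * a)` for every `a`. By adjointness and faithfulness of `φ`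
this says `Φ♯ (Φ c) = c`: on `B` the adjoint `Φ♯` is the inverse of `Φ|_B`, hence again a
multiplicative map of `B`, and so all `Φ_k` are multiplicative on `B`. -/

open scoped ComplexOrder

section
variable {M : Type*} [NormedRing M] [StarRing M] [CStarRing M] [NormedAlgebra ℂ M]
  [StarModule ℂ M] [CompleteSpace M] [PartialOrder M] [StarOrderedRing M]

/-- The two-sided family of dynamics: `Φ^k` for `k ≥ 0` and `(Φ♯)^|k|` for `k < 0`. -/
noncomputable def phiZ (Φ Ψ : Module.End ℂ M) : ℤ → Module.End ℂ M :=
  fun k => if 0 ≤ k then Φ ^ k.toNat else Ψ ^ (-k).toNat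

/-- The algebra of effective observables `D_∞ = ⋂_{k ∈ ℤ} D_{Φ_k}`. -/
def Dinf (Φ Ψ : Module.End ℂ M) : Set M := ⋂ k : ℤ, multDomain (phiZ Φ Ψ k)

theorem Complex.eq_zero_of_forall_nonneg_mul_add_sq_mul {A C : ℂ}
    (h : ∀ ε : ℝ, 0 ≤ (ε : ℂ) * A + (ε : ℂ) ^ 2 * C) : A = 0 := by
  have hre : ∀ ε : ℝ, 0 ≤ C.re * (ε * ε) + A.re * ε + 0 := fun ε => by
    have := (Complex.nonneg_iff.1 (h ε)).1
    simp only [Complex.add_re, Complex.re_ofReal_mul, sq, ← Complex.ofReal_mul] at this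
    linarith
  have him : ∀ ε : ℝ, ε * A.im + ε ^ 2 * C.im = 0 := fun ε => by
    simpa [eq_comm, ← Complex.ofReal_pow] using (Complex.nonneg_iff.1 (h ε)).2
  have hA_re : A.re = 0 := by
    have := discrim_le_zero hre
    rw [discrim] at this
    nlinarith
  have hA_im : A.im = 0 := by linarith [him 1, him (-1)]
  exact Complex.ext hA_re hA_im

theorem LinearMap.IsNonneg.apply_eq_zero_of_apply_self_eq_zero {E : Type*} [AddCommGroup E]
    [Module ℂ E] {f : E →ₗ⋆[ℂ] E →ₗ[ℂ] ℂ} (hf : f.IsNonneg) {x : E} (hx : f x x = 0) (y : E) :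
    f x y = 0 := by
  -- test nonnegativity along `x + t • y` for real and for purely imaginary `t`
  have expand : ∀ t : ℂ, 0 ≤ t * f x y + star t * f y x + star t * t * f y y := fun t => by
    have := hf.nonneg (x + t • y)
    simp only [map_add, map_smulₛₗ, LinearMap.add_apply, LinearMap.smul_apply, smul_eq_mul,
      RingHom.id_apply, starRingEnd_apply, hx] at this
    convert this using 1
    ring
  have hsym : f x y + f y x = 0 := Complex.eq_zero_of_forall_nonneg_mul_add_sq_mul (C := f y y) fun ε => by
    convert expand ε using 1
    simp only [Complex.star_def, Complex.conj_ofReal]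
    ring
  have hanti : Complex.I * (f x y - f y x) = 0 :=
    Complex.eq_zero_of_forall_nonneg_mul_add_sq_mul (C := f y y) fun ε => by
      convert expand (ε * Complex.I) using 1
      simp only [Complex.star_def, map_mul, Complex.conj_ofReal, Complex.conj_I]
      linear_combination ((ε : ℂ) ^ 2 * f y y) * Complex.I_sq
  have hskew := mul_eq_zero.1 hanti |>.resolve_left Complex.I_ne_zero
  linear_combination (hsym + hskew) / 2

theorem map_nonneg_of_forall_star_mul_self_nonneg_s11 {A : Type*} [NonUnitalSemiring A]
    [PartialOrder A] [StarRing A] [StarOrderedRing A] [Module ℂ A] {φ : A →ₗ[ℂ] ℂ}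
    (hφ : ∀ a : A, 0 ≤ φ (star a * a)) {p : A} (hp : 0 ≤ p) : 0 ≤ φ p := by
  rw [StarOrderedRing.nonneg_iff] at hp
  induction hp using AddSubmonoid.closure_induction with
  | mem x hx => obtain ⟨s, rfl⟩ := hx; exact hφ s
  | zero => simp
  | add a b _ _ ha hb => rw [map_add]; exact add_nonneg ha hb

theorem Module.End.pow_apply_mul_of_mapsTo {R A : Type*} [Semiring R]
    [NonUnitalNonAssocSemiring A] [Module R A] {T : Module.End R A} {S : Set A}
    (hT : Set.MapsTo T S S) (hmul : ∀ b ∈ S, ∀ c ∈ S, T (b * c) = T b * T c) (n : ℕ) :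
    ∀ b ∈ S, ∀ c ∈ S, (T ^ n) (b * c) = (T ^ n) b * (T ^ n) c := by
  induction n with
  | zero => simp
  | succ n ih =>
    intro b hb c hc
    simp only [pow_succ, Module.End.mul_apply, hmul b hb c hc]
    exact ih _ (hT hb) _ (hT hc)

theorem Set.LeftInvOn.map_mul_of_surjOn {A : Type*} [Mul A] {f g : A → A} {S : Set A}
    (h : Set.LeftInvOn g f S) (hf : Set.SurjOn f S S) (hS : ∀ b ∈ S, ∀ c ∈ S, b * c ∈ S)
    (hmul : ∀ b ∈ S, ∀ c ∈ S, f (b * c) = f b * f c) :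
    ∀ b ∈ S, ∀ c ∈ S, g (b * c) = g b * g c := by
  rintro _ hfb _ hfc
  obtain ⟨b, hb, rfl⟩ := hf hfb
  obtain ⟨c, hc, rfl⟩ := hf hfc
  rw [← hmul b hb c hc, h hb, h hc, h (hS b hb c hc)]

def schwartzDefect {A : Type*} [Ring A] [StarRing A] [Algebra ℂ A] [StarModule ℂ A]
    (Φ : Module.End ℂ A) (φ : A →ₗ[ℂ] ℂ) : A →ₗ⋆[ℂ] A →ₗ[ℂ] ℂ :=
  LinearMap.mk₂'ₛₗ (starRingEnd ℂ) (RingHom.id ℂ)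
    (fun u v => φ (Φ (star u * v)) - φ (star (Φ u) * Φ v))
    (fun u u' v => by simp only [star_add, add_mul, map_add]; ring)
    (fun t u v => by simp only [star_smul, smul_mul_assoc, map_smul, smul_eq_mul,
      starRingEnd_apply]; ring)
    (fun u v v' => by simp only [mul_add, map_add]; ring)
    (fun t u v => by simp only [mul_smul_comm, map_smul, smul_eq_mul, RingHom.id_apply]; ring)

theorem schwartzDefect_apply {A : Type*} [Ring A] [StarRing A] [Algebra ℂ A] [StarModule ℂ A]
    (Φ : Module.End ℂ A) (φ : A →ₗ[ℂ] ℂ) (u v : A) :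
    schwartzDefect Φ φ u v = φ (Φ (star u * v)) - φ (star (Φ u) * Φ v) := rfl

theorem IsFaithful.eq_of_forall_map_mul_eq
    {A : Type*} [NormedRing A] [StarRing A] [NormedAlgebra ℂ A]
    {φ : A →ₗ[ℂ] ℂ} (hfaith : IsFaithful φ) {x y : A}
    (h : ∀ a : A, φ (x * a) = φ (y * a)) : x = y := by
  have : star (x - y) = 0 := hfaith _ <| by rw [star_star, sub_mul, map_sub, h, sub_self]
  rwa [star_eq_zero, sub_eq_zero] at this

section

variable {A : Type*} [NormedRing A] [StarRing A] [NormedAlgebra ℂ A] [StarModule ℂ A]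
  [PartialOrder A] [StarOrderedRing A] {Φ Ψ : Module.End ℂ A} {φ : A →ₗ[ℂ] ℂ}

theorem isNonneg_schwartzDefect (hΦ : IsSchwartz Φ) (hφ : IsState φ) :
    (schwartzDefect Φ φ).IsNonneg :=
  ⟨fun a => by
    simpa [schwartzDefect_apply] using
      map_nonneg_of_forall_star_mul_self_nonneg_s11 hφ.2 (sub_nonneg.2 (hΦ.2 a))⟩

theorem IsSchwartz.map_star_mul_eq (hΦ : IsSchwartz Φ) (hφ : IsState φ) {x : A}
    (hx : Φ (star x * x) = star (Φ x) * Φ x) (y : A) :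
    φ (Φ (star x * y)) = φ (star (Φ x) * Φ y) :=
  sub_eq_zero.1 <| (isNonneg_schwartzDefect hΦ hφ).apply_eq_zero_of_apply_self_eq_zero
    (by rw [schwartzDefect_apply, hx, sub_self]) y

theorem adjoint_map_eq_self (hΦ : IsSchwartz Φ) (hφ : IsState φ) (hfaith : IsFaithful φ)
    (hstat : ∀ a : A, φ (Φ a) = φ a) (hadj : ∀ a b : A, φ (b * Φ a) = φ (Ψ b * a)) {c : A}
    (hc_mul : Φ (c * star c) = Φ c * Φ (star c)) (hc_star : Φ (star c) = star (Φ c)) :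
    Ψ (Φ c) = c := by
  have hmul_star : Φ (star (star c) * star c) = star (Φ (star c)) * Φ (star c) := by
    rw [star_star, hc_mul, hc_star, star_star]
  refine hfaith.eq_of_forall_map_mul_eq fun a => ?_
  calc φ (Ψ (Φ c) * a) = φ (Φ c * Φ a) := (hadj a _).symm
    _ = φ (Φ (c * a)) := by
      simpa only [star_star, hc_star] using (hΦ.map_star_mul_eq hφ hmul_star a).symm
    _ = φ (c * a) := hstat _

end

theorem subset_multDomain_of_map_mul {A : Type*} [NormedRing A] [StarRing A] [NormedAlgebra ℂ A]
    [StarModule ℂ A] (B : StarSubalgebra ℂ A) {T : Module.End ℂ A}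
    (hT : ∀ b ∈ B, ∀ c ∈ B, T (b * c) = T b * T c) : (B : Set A) ⊆ multDomain T :=
  fun _ hb => ⟨hT _ (star_mem hb) _ hb, hT _ hb _ (star_mem hb)⟩

set_option linter.unusedSectionVars false in
theorem Dinf_maximal_general
    (Φ Ψ : Module.End ℂ M) (hΦ : IsSchwartz Φ)
    (φ : M →ₗ[ℂ] ℂ) (hφ : IsState φ) (hfaith : IsFaithful φ)
    (hstat : ∀ a : M, φ (Φ a) = φ a)
    (hadj : ∀ a b : M, φ (b * Φ a) = φ (Ψ b * a))
    (B : StarSubalgebra ℂ M)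
    (hmaps : ∀ b ∈ B, Φ b ∈ B)
    (hmulB : ∀ b ∈ B, ∀ c ∈ B, Φ (b * c) = Φ b * Φ c)
    (hstarB : ∀ b ∈ B, Φ (star b) = star (Φ b))
    (hsurjB : ∀ b ∈ B, ∃ c ∈ B, Φ c = b) :
    (B : Set M) ⊆ Dinf Φ Ψ := by
  have hinv : Set.LeftInvOn Ψ Φ B := fun c hc =>
    adjoint_map_eq_self hΦ hφ hfaith hstat hadj (hmulB c hc _ (star_mem hc)) (hstarB c hc)
  have hΨ_maps : Set.MapsTo Ψ B B := hinv.mapsTo hsurjB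
  have hΨ_mul := hinv.map_mul_of_surjOn hsurjB (fun _ hb _ hc => mul_mem hb hc) hmulB
  intro b hb
  rw [Dinf, Set.mem_iInter]
  intro k
  unfold phiZ
  split_ifs
  · exact subset_multDomain_of_map_mul B (Module.End.pow_apply_mul_of_mapsTo hmaps hmulB _) hb
  · exact subset_multDomain_of_map_mul B (Module.End.pow_apply_mul_of_mapsTo hΨ_maps hΨ_mul _) hb

/-- any von Neumann subalgebra `B` on which `Φ` restricts to a
*-automorphism is contained in `D_∞`; thus `D_∞` is maximal. -/
theorem Dinf_maximal
    (Φ Ψ : Module.End ℂ M) (hΦ : IsSchwartz Φ) (hΨ : IsSchwartz Ψ)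
    (φ : M →ₗ[ℂ] ℂ) (hφ : IsState φ) (hfaith : IsFaithful φ)
    (hstat : ∀ a : M, φ (Φ a) = φ a)
    (hadj : ∀ a b : M, φ (b * Φ a) = φ (Ψ b * a))
    (B : StarSubalgebra ℂ M)
    (hmaps : ∀ b ∈ B, Φ b ∈ B)
    (hmulB : ∀ b ∈ B, ∀ c ∈ B, Φ (b * c) = Φ b * Φ c)
    (hstarB : ∀ b ∈ B, Φ (star b) = star (Φ b))
    (hsurjB : ∀ b ∈ B, ∃ c ∈ B, Φ c = b)
    (hinjB : Set.InjOn Φ (B : Set M)) :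
    (B : Set M) ⊆ Dinf Φ Ψ :=
  Dinf_maximal_general Φ Ψ hΦ φ hφ hfaith hstat hadj B hmaps hmulB hstarB hsurjB
end
end

section
/- Let (M̂, Φ̂, φ̂) with embedding i : M → M̂ and completely positive E : M̂ → M be a dilation of the quantum dynamical system (M, Φ, φ), i.e., E(Φ̂ⁿ(i(a))) = Φⁿ(a) for all a and n, with E faithful and satisfying the module property E(i(a)X) = aE(X). Then for a ∈ M: Φ̂(i(a)) = i(Φ(a)) if and only if a belongs to the multiplicative domain D_Φ. -/
open scoped ComplexOrder

section
variable {M : Type*} [NormedRing M] [StarRing M] [CStarRing M] [NormedAlgebra ℂ M]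
  [StarModule ℂ M] [CompleteSpace M] [PartialOrder M] [StarOrderedRing M]

variable {N : Type*} [NormedRing N] [StarRing N] [CStarRing N] [NormedAlgebra ℂ N]
  [StarModule ℂ N] [CompleteSpace N] [PartialOrder N] [StarOrderedRing N]

/-- for a reversible dilation `(N, Φ̂, φ̂)` of `(M, Φ, φ)` with embedding `i`
and faithful expectation `E`, one has `Φ̂(i(a)) = i(Φ(a))` iff `a ∈ D_Φ`. -/
theorem dilation_commutes_iff_multDomain
    (Φ : Module.End ℂ M) (hΦ : IsSchwartz Φ)
    (φ : M →ₗ[ℂ] ℂ) (hφ : IsState φ) (hfaith : IsFaithful φ)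
    (hstat : ∀ a : M, φ (Φ a) = φ a)
    (Φhat : N ≃⋆ₐ[ℂ] N) (i : M →⋆ₐ[ℂ] N) (hi : Function.Injective i)
    (E : N →ₗ[ℂ] M)
    (hEi : ∀ a : M, E (i a) = a)
    (hmodl : ∀ (a : M) (X : N), E (i a * X) = a * E X)
    (hmodr : ∀ (a : M) (X : N), E (X * i a) = E X * a)
    (hEfaith : ∀ X : N, E (star X * X) = 0 → X = 0)
    (hdil : ∀ (a : M) (n : ℕ), E ((⇑Φhat)^[n] (i a)) = (Φ ^ n) a) :
    ∀ a : M, Φhat (i a) = i (Φ a) ↔ a ∈ multDomain Φ := by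
  have key : ∀ b : M, E (Φhat (i b)) = Φ b := by
    intro b
    have h := hdil b 1
    simpa using h
  have hstarhat : ∀ b : M, Φhat (i (star b)) = star (Φhat (i b)) := by
    intro b
    rw [map_star, map_star]
  intro a
  constructor
  · intro h
    have hstar : Φ (star a) = star (Φ a) := by
      have h1 : Φhat (i (star a)) = i (star (Φ a)) := by
        rw [hstarhat, h, ← map_star]
      have h2 := key (star a)
      rw [h1, hEi] at h2
      exact h2.symm
    have hmul1 : Φ (star a * a) = Φ (star a) * Φ a := by
      have : E (Φhat (i (star a * a))) = Φ (star a * a) := key _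
      rw [map_mul, map_mul, hstarhat, h, ← map_star, ← map_mul, hEi] at this
      rw [← this, hstar]
    have hmul2 : Φ (a * star a) = Φ a * Φ (star a) := by
      have : E (Φhat (i (a * star a))) = Φ (a * star a) := key _
      rw [map_mul, map_mul, hstarhat, h, ← map_star, ← map_mul, hEi] at this
      rw [← this, hstar]
    exact ⟨hmul1, hmul2⟩
  · intro ha
    have hA : E (star (Φhat (i a)) * Φhat (i a)) = Φ (star a * a) := by
      rw [← map_star, ← map_star, ← map_mul, ← map_mul]
      exact key _
    have hEstar : E (star (Φhat (i a))) = Φ (star a) := by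
      rw [← map_star, ← map_star]
      exact key _
    have hB : E (star (Φhat (i a)) * i (Φ a)) = Φ (star a) * Φ a := by
      rw [hmodr, hEstar]
    have hC : E (star (i (Φ a)) * Φhat (i a)) = star (Φ a) * Φ a := by
      rw [← map_star, hmodl, key]
    have hD : E (star (i (Φ a)) * i (Φ a)) = star (Φ a) * Φ a := by
      rw [← map_star, ← map_mul, hEi]
    set X : N := Φhat (i a) - i (Φ a) with hX
    have hexp : star X * X =
        star (Φhat (i a)) * Φhat (i a) - star (Φhat (i a)) * i (Φ a)
          - star (i (Φ a)) * Φhat (i a) + star (i (Φ a)) * i (Φ a) := by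
      rw [hX, star_sub]
      noncomm_ring
    have hzero : E (star X * X) = 0 := by
      rw [hexp, map_add, map_sub, map_sub, hA, hB, hC, hD, ha.1]
      abel
    have := hEfaith X hzero
    rw [hX, sub_eq_zero] at this
    exact this

end
end
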